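/- arXiv:2404.11222 — 2 statements merged into one kernel-verified Lean document; each statement's English description precedes it below -/
import Mathlib

section
/- Let d ≥ 1 and let q : ℝ → ℝ^d be continuous with summatory parameter q(t) := q_1(t) + ⋯ + q_d(t). Define the vector-valued function x(t) := exp(−∫₀ᵗ q(ρ)dρ) · ∫₀ᵗ q(τ)·exp(∫₀^τ q(σ)dσ) dτ for t ≥ 0, and set M(t) := (1 − x(t))·I + C_{x(t)}, where x(t) := x_1(t) + ⋯ + x_d(t). Then M(0) = I and, for every t ≥ 0, M is differentiable at t with M′(t) = M(t)·Q_{q(t)}; that is, M(t) = M_{x(t)} solves the Cauchy problem M′ = M·Q_{q(·)}, M(0) = I. -/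
/-!
Write `∑ x` for the summatory parameter. Since `M_x = I + Q_x` and `C_x C_y = (∑ x)·C_y`, one has
`Q_x Q_y = −(∑ y)·Q_x`, hence `M_x Q_y = Q_{y − (∑ y)·x}`. As `x ↦ Q_x` is linear, `M(t)' = Q_{x'(t)}`,
and `x(t)` is the variation-of-constants solution of `x' = q − (∑ q)·x`, `x(0) = 0`.
-/

open Matrix

/-- `eqRows d x` is the `d × d` real matrix all of whose rows equal the row vector `x`. -/
def eqRows (d : ℕ) (x : Fin d → ℝ) : Matrix (Fin d) (Fin d) ℝ :=
  Matrix.of fun _ j => x j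

/-- The equal-input generator `Q_x := −x·I + C_x`, where `x = ∑ᵢ xᵢ`. -/
noncomputable def Qgen (d : ℕ) (x : Fin d → ℝ) : Matrix (Fin d) (Fin d) ℝ :=
  (-(∑ i, x i)) • (1 : Matrix (Fin d) (Fin d) ℝ) + eqRows d x

/-- The solution vector
`x(t) = exp(−∫₀ᵗ q(ρ)dρ) · ∫₀ᵗ q(τ)·exp(∫₀^τ q(σ)dσ) dτ`, where `q(t) = ∑ᵢ qᵢ(t)`. -/
noncomputable def xsol (d : ℕ) (q : ℝ → Fin d → ℝ) (t : ℝ) : Fin d → ℝ :=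
  Real.exp (-∫ ρ in (0:ℝ)..t, ∑ i, q ρ i) •
    ∫ τ in (0:ℝ)..t, Real.exp (∫ σ in (0:ℝ)..τ, ∑ i, q σ i) • q τ

/-- The equal-input matrix `M_{x(t)} = (1 − x(t))·I + C_{x(t)}`. -/
noncomputable def Msol (d : ℕ) (q : ℝ → Fin d → ℝ) (t : ℝ) : Matrix (Fin d) (Fin d) ℝ :=
  (1 - ∑ i, xsol d q t i) • (1 : Matrix (Fin d) (Fin d) ℝ) + eqRows d (xsol d q t)

section VariationOfConstants

variable {E : Type*} [NormedAddCommGroup E] [NormedSpace ℝ E] [CompleteSpace E]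

theorem hasDerivAt_exp_neg_integral_smul_integral {p : ℝ → ℝ} {g : ℝ → E}
    (hp : Continuous p) (hg : Continuous g) (a t : ℝ) :
    HasDerivAt
      (fun s => Real.exp (-∫ r in a..s, p r) • ∫ τ in a..s, Real.exp (∫ σ in a..τ, p σ) • g τ)
      (g t - p t • (Real.exp (-∫ r in a..t, p r) •
        ∫ τ in a..t, Real.exp (∫ σ in a..τ, p σ) • g τ)) t := by
  have hP : ∀ s, HasDerivAt (fun u => ∫ r in a..u, p r) (p s) s := fun s =>
    (hp.integral_hasStrictDerivAt a s).hasDerivAt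
  have hP_cont : Continuous fun u => ∫ r in a..u, p r :=
    continuous_iff_continuousAt.2 fun s => (hP s).continuousAt
  have hG : HasDerivAt (fun s => ∫ τ in a..s, Real.exp (∫ σ in a..τ, p σ) • g τ)
      (Real.exp (∫ σ in a..t, p σ) • g t) t :=
    (((Real.continuous_exp.comp hP_cont).smul hg).integral_hasStrictDerivAt a t).hasDerivAt
  refine (((hP t).neg.exp).smul hG).congr_deriv ?_
  rw [Pi.neg_apply, smul_smul, ← Real.exp_add, neg_add_cancel, Real.exp_zero, one_smul, smul_smul,
    mul_neg, neg_smul, mul_comm, sub_eq_add_neg]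

end VariationOfConstants

theorem hasDerivAt_xsol {d : ℕ} {q : ℝ → Fin d → ℝ} (hq : Continuous q) (t : ℝ) :
    HasDerivAt (xsol d q) (q t - (∑ i, q t i) • xsol d q t) t :=
  hasDerivAt_exp_neg_integral_smul_integral
    (continuous_finsetSum _ fun i _ => (continuous_apply i).comp hq) hq 0 t

theorem xsol_zero (d : ℕ) (q : ℝ → Fin d → ℝ) : xsol d q 0 = 0 := by
  simp [xsol]

section EqualInput

variable {d : ℕ}

theorem Qgen_apply (x : Fin d → ℝ) (i j : Fin d) :
    Qgen d x i j = -(∑ k, x k) * (1 : Matrix (Fin d) (Fin d) ℝ) i j + x j := by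
  simp [Qgen, eqRows]

theorem Qgen_zero : Qgen d 0 = 0 := by
  ext i j
  simp [Qgen_apply]

theorem Qgen_sub (x y : Fin d → ℝ) : Qgen d (x - y) = Qgen d x - Qgen d y := by
  ext i j
  simp only [Qgen_apply, Pi.sub_apply, Finset.sum_sub_distrib, Matrix.sub_apply]
  ring

theorem Qgen_smul (c : ℝ) (x : Fin d → ℝ) : Qgen d (c • x) = c • Qgen d x := by
  ext i j
  simp only [Qgen_apply, Pi.smul_apply, smul_eq_mul, ← Finset.mul_sum, Matrix.smul_apply]
  ring

theorem eqRows_mul_eqRows (x y : Fin d → ℝ) :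
    eqRows d x * eqRows d y = (∑ k, x k) • eqRows d y := by
  ext i j
  simp [eqRows, Matrix.mul_apply, Finset.sum_mul]

theorem Qgen_mul_Qgen (x y : Fin d → ℝ) :
    Qgen d x * Qgen d y = (-(∑ k, y k)) • Qgen d x := by
  simp only [Qgen, Matrix.add_mul, Matrix.mul_add, Matrix.smul_mul, Matrix.mul_smul,
    Matrix.one_mul, Matrix.mul_one, eqRows_mul_eqRows, smul_add, smul_smul]
  module

theorem Msol_eq_one_add_Qgen (q : ℝ → Fin d → ℝ) (t : ℝ) :
    Msol d q t = 1 + Qgen d (xsol d q t) := by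
  simp only [Msol, Qgen, sub_smul, one_smul, neg_smul]
  abel

theorem one_add_Qgen_mul_Qgen (x y : Fin d → ℝ) :
    (1 + Qgen d x) * Qgen d y = Qgen d (y - (∑ k, y k) • x) := by
  rw [Matrix.add_mul, Matrix.one_mul, Qgen_mul_Qgen, Qgen_sub, Qgen_smul, neg_smul,
    sub_eq_add_neg]

theorem HasDerivAt.Qgen_apply {x : ℝ → Fin d → ℝ} {x' : Fin d → ℝ} {t : ℝ}
    (hx : HasDerivAt x x' t) (i j : Fin d) :
    HasDerivAt (fun s => Qgen d (x s) i j) (Qgen d x' i j) t := by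
  have hcoord : ∀ k, HasDerivAt (fun s => x s k) (x' k) t := fun k => hasDerivAt_pi.1 hx k
  simp only [_root_.Qgen_apply]
  exact ((HasDerivAt.fun_sum fun k _ => hcoord k).neg.mul_const _).add (hcoord j)

end EqualInput

theorem stmt8_general (d : ℕ) (q : ℝ → Fin d → ℝ) (hq : Continuous q) :
    Msol d q 0 = 1 ∧
    ∀ t, 0 ≤ t → ∀ i j,
      HasDerivAt (fun s => Msol d q s i j) ((Msol d q t * Qgen d (q t)) i j) t := by
  refine ⟨by rw [Msol_eq_one_add_Qgen, xsol_zero, Qgen_zero, add_zero], fun t _ i j => ?_⟩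
  simp only [Msol_eq_one_add_Qgen, one_add_Qgen_mul_Qgen, Matrix.add_apply]
  exact ((hasDerivAt_xsol hq t).Qgen_apply i j).const_add _

/-- for continuous `q`, the matrix family `M(t) := M_{x(t)}` with the explicit
vector `x(t)` above satisfies `M(0) = I` and the Kolmogorov forward equation
`M′(t) = M(t)·Q_{q(t)}` (entrywise derivative) for all `t ≥ 0`. -/
theorem stmt8 (d : ℕ) (hd : 1 ≤ d) (q : ℝ → Fin d → ℝ) (hq : Continuous q) :
    Msol d q 0 = 1 ∧
    ∀ t, 0 ≤ t → ∀ i j,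
      HasDerivAt (fun s => Msol d q s i j) ((Msol d q t * Qgen d (q t)) i j) t :=
  stmt8_general d q hq
end

section
/- Let d ≥ 1 and let x ∈ ℝ^d with summatory parameter x := x_1 + ⋯ + x_d satisfying x < 1 and x ≠ 0. Set R := (−log(1 − x)/x)·Q_x. Then exp(R) = (1 − x)·I + C_x = M_x; i.e., R is a real logarithm of the equal-input matrix M_x, itself of equal-input form. If moreover all entries of x are ≥ 0 (so that 0 < x < 1), then R is a Markov generator: R has zero row sums and all off-diagonal entries of R are ≥ 0. -/
/-!
Since `C_x * C_x = x • C_x`, the matrix `P := 1 - x⁻¹ • C_x` is idempotent and `Q_x = -x • P`, so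
`R = log (1 - x) • P`. For an idempotent `P` the exponential series collapses to
`exp (t • P) = 1 + (eᵗ - 1) • P`, whence `exp R = 1 - x • P = M_x`. The Markov property comes from
the coefficient `-log (1 - x) / x` being nonnegative for every `x < 1`.
-/

open Matrix

/-- The real logarithm `R := (−log(1 − x)/x)·Q_x` of the equal-input matrix `M_x`. -/
noncomputable def Rlog (d : ℕ) (x : Fin d → ℝ) : Matrix (Fin d) (Fin d) ℝ :=
  (-Real.log (1 - ∑ i, x i) / ∑ i, x i) • Qgen d x

open scoped Nat

theorem IsIdempotentElem.exp_smul {𝔸 : Type*} [Ring 𝔸] [Algebra ℝ 𝔸] [TopologicalSpace 𝔸]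
    [IsTopologicalRing 𝔸] [ContinuousSMul ℝ 𝔸] [T2Space 𝔸] {p : 𝔸} (hp : IsIdempotentElem p)
    (t : ℝ) : NormedSpace.exp (t • p) = 1 + (Real.exp t - 1) • p := by
  have hterm : ∀ n : ℕ, ((n ! : ℝ)⁻¹ • (t • p) ^ n) =
      (t ^ n / n !) • p + if n = 0 then 1 - p else 0 := by
    rintro (_ | n)
    · simp
    · rw [smul_pow, hp.pow_succ_eq, smul_smul, div_eq_inv_mul, if_neg n.succ_ne_zero, add_zero]
  have hsum : HasSum (fun n : ℕ => (n ! : ℝ)⁻¹ • (t • p) ^ n) (Real.exp t • p + (1 - p)) := by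
    simp only [hterm]
    exact ((Real.exp_eq_exp_ℝ ▸ NormedSpace.expSeries_div_hasSum_exp t).smul_const p).add
      (hasSum_ite_eq 0 (1 - p))
  calc NormedSpace.exp (t • p) = Real.exp t • p + (1 - p) := by
        rw [NormedSpace.exp_eq_tsum ℝ]; exact hsum.tsum_eq
    _ = 1 + (Real.exp t - 1) • p := by rw [sub_smul, one_smul]; abel

theorem isIdempotentElem_inv_smul_of_mul_self_eq_smul {𝕜 A : Type*} [Field 𝕜] [Ring A]
    [Algebra 𝕜 A] {c : A} {s : 𝕜} (hs : s ≠ 0) (h : c * c = s • c) :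
    IsIdempotentElem (s⁻¹ • c) := by
  rw [IsIdempotentElem, smul_mul_smul, h, smul_smul, mul_assoc, inv_mul_cancel₀ hs, mul_one]

section EqualInput

variable {d : ℕ} (x : Fin d → ℝ)

lemma eqRows_mul_self : eqRows d x * eqRows d x = (∑ i, x i) • eqRows d x := by
  ext i j
  simp [eqRows, Matrix.mul_apply, ← Finset.sum_mul]

lemma Qgen_eq_neg_smul_one_sub (h0 : ∑ i, x i ≠ 0) :
    Qgen d x = (-∑ i, x i) • (1 - (∑ i, x i)⁻¹ • eqRows d x) := by
  rw [Qgen, smul_sub, smul_smul, neg_mul, mul_inv_cancel₀ h0]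
  module

lemma Rlog_eq_log_smul (h0 : ∑ i, x i ≠ 0) :
    Rlog d x = Real.log (1 - ∑ i, x i) • (1 - (∑ i, x i)⁻¹ • eqRows d x) := by
  rw [Rlog, Qgen_eq_neg_smul_one_sub x h0, smul_smul]
  congr 1
  field_simp

lemma Qgen_row_sum (i : Fin d) : ∑ j, Qgen d x i j = 0 := by
  simp [Qgen, eqRows, Matrix.one_apply, Finset.sum_add_distrib]

lemma Qgen_apply_of_ne {i j : Fin d} (hij : i ≠ j) : Qgen d x i j = x j := by
  simp [Qgen, eqRows, Matrix.one_apply_ne hij]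

lemma neg_log_one_sub_div_nonneg {s : ℝ} (hs : s < 1) : 0 ≤ -Real.log (1 - s) / s := by
  rcases le_total s 0 with hneg | hpos
  · exact div_nonneg_of_nonpos (neg_nonpos.2 (Real.log_nonneg (by linarith))) hneg
  · exact div_nonneg (neg_nonneg.2 (Real.log_nonpos (by linarith) (by linarith))) hpos

lemma Rlog_row_sum (i : Fin d) : ∑ j, Rlog d x i j = 0 := by
  simp only [Rlog, Matrix.smul_apply, smul_eq_mul, ← Finset.mul_sum, Qgen_row_sum, mul_zero]

lemma Rlog_apply_nonneg_of_ne (h1 : ∑ i, x i < 1) {i j : Fin d} (hij : i ≠ j) (hx : 0 ≤ x j) :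
    0 ≤ Rlog d x i j := by
  rw [Rlog, Matrix.smul_apply, Qgen_apply_of_ne x hij, smul_eq_mul]
  exact mul_nonneg (neg_log_one_sub_div_nonneg h1) hx

end EqualInput

theorem stmt10_general (d : ℕ) (x : Fin d → ℝ)
    (h1 : ∑ i, x i < 1) (h0 : ∑ i, x i ≠ 0) :
    NormedSpace.exp (Rlog d x) =
      (1 - ∑ i, x i) • (1 : Matrix (Fin d) (Fin d) ℝ) + eqRows d x ∧
    ((∀ i, 0 ≤ x i) →
      (∀ i, ∑ j, Rlog d x i j = 0) ∧ (∀ i j, i ≠ j → 0 ≤ Rlog d x i j)) := by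
  refine ⟨?_, fun hx => ⟨Rlog_row_sum x, fun i j hij => Rlog_apply_nonneg_of_ne x h1 hij (hx j)⟩⟩
  have hP : IsIdempotentElem (1 - (∑ i, x i)⁻¹ • eqRows d x) :=
    (isIdempotentElem_inv_smul_of_mul_self_eq_smul h0 (eqRows_mul_self x)).one_sub
  rw [Rlog_eq_log_smul x h0, hP.exp_smul, Real.exp_log (by linarith), sub_sub_cancel_left,
    smul_sub, smul_smul, neg_mul, mul_inv_cancel₀ h0]
  module

/-- if `x = ∑ᵢ xᵢ` satisfies `x < 1` and `x ≠ 0`, then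
`exp(R) = (1 − x)·I + C_x = M_x` with `R := (−log(1 − x)/x)·Q_x`; and if all entries of `x`
are nonnegative then `R` is a Markov generator (zero row sums, nonnegative off-diagonal). -/
theorem stmt10 (d : ℕ) (hd : 1 ≤ d) (x : Fin d → ℝ)
    (h1 : ∑ i, x i < 1) (h0 : ∑ i, x i ≠ 0) :
    NormedSpace.exp (Rlog d x) =
      (1 - ∑ i, x i) • (1 : Matrix (Fin d) (Fin d) ℝ) + eqRows d x ∧
    ((∀ i, 0 ≤ x i) →
      (∀ i, ∑ j, Rlog d x i j = 0) ∧ (∀ i j, i ≠ j → 0 ≤ Rlog d x i j)) :=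
  stmt10_general d x h1 h0
end
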